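/- arXiv:math/0209050 — 2 statements merged into one kernel-verified Lean document; each statement's English description precedes it below -/
import Mathlib

section
/- Let t > 0, and let μ and ν be finite Borel measures on the interval [0,t]. If ∫_{[0,t]} p_k(s) dμ(s) = ∫_{[0,t]} p_k(s) dν(s) for every integer k ≥ 0, then μ = ν. (Equivalently, the linear span of the functions p_k restricted to [0,t] is dense in C([0,t]).) -/
/-!
Summing the series for `p_j(s)` against `x ^ j` and exchanging the two sums gives the generating
function `∑ⱼ p_j(s) xʲ = e^{-s} ∑ₖ sᵏ x(x+1)⋯(x+k-1) / (k!)²`. At `x = -m` the rising factorial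
vanishes for `k > m`, and the series becomes `e^{-s} L_m(s)` with `L_m` the Laguerre polynomial,
of degree exactly `m`. Dominated convergence on `[0,t]` transfers the hypothesis to these
functions, so by triangularity `μ` and `ν` have the same weighted moments `∫ e^{-s} sⁿ`, and by
Weierstrass approximation of `eˢ f` they integrate every continuous `f` alike.
-/

open MeasureTheory ProbabilityTheory Real

open MeasureTheory ProbabilityTheory Real

/-- Signless Stirling numbers of the first kind: coefficient of `x^j` in `x(x+1)⋯(x+k-1)`. -/
noncomputable def stirling1 (k j : ℕ) : ℝ :=
  (∏ i ∈ Finset.range k, (Polynomial.X + Polynomial.C (i : ℝ))).coeff j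

/-- Stirling numbers of the second kind. -/
def stirling2 : ℕ → ℕ → ℕ
  | 0, 0 => 1
  | 0, _ + 1 => 0
  | _ + 1, 0 => 0
  | n + 1, k + 1 => (k + 1) * stirling2 n (k + 1) + stirling2 n k

/-- `p_j(t) = e^{-t} Σ_{k≥j} (t^k/k!) σ₁(k,j)/k!` (terms with `k<j` vanish). -/
noncomputable def pfn (j : ℕ) (t : ℝ) : ℝ :=
  Real.exp (-t) * ∑' k : ℕ, t ^ k / (Nat.factorial k : ℝ) * (stirling1 k j / (Nat.factorial k : ℝ))

/-- `q_j(t) = e^{-t} Σ_{k≥0} (t^k/(k+1)!) Σ_{i=0}^k σ₁(i,j)/i!`. -/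
noncomputable def qfn (j : ℕ) (t : ℝ) : ℝ :=
  Real.exp (-t) * ∑' k : ℕ, t ^ k / (Nat.factorial (k + 1) : ℝ) *
    ∑ i ∈ Finset.range (k + 1), stirling1 i j / (Nat.factorial i : ℝ)

/-- `I(t,s) = ∫_s^t e^{-ξ}/ξ dξ`. -/
noncomputable def Ifun (t s : ℝ) : ℝ := ∫ ξ in s..t, Real.exp (-ξ) / ξ

/-- `I(s) = ∫_s^∞ e^{-ξ}/ξ dξ`. -/
noncomputable def Iinf (s : ℝ) : ℝ := ∫ ξ in Set.Ioi s, Real.exp (-ξ) / ξ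

/-- `I₂(t,s) = ∫_s^t e^{-ξ}/ξ² dξ`. -/
noncomputable def I2fun (t s : ℝ) : ℝ := ∫ ξ in s..t, Real.exp (-ξ) / ξ ^ 2

/-- `I₂(s) = ∫_s^∞ e^{-ξ}/ξ² dξ`. -/
noncomputable def I2inf (s : ℝ) : ℝ := ∫ ξ in Set.Ioi s, Real.exp (-ξ) / ξ ^ 2

/-- `J(t) = ∫_0^t (e^ξ - 1)/ξ dξ`. -/
noncomputable def Jfun (t : ℝ) : ℝ := ∫ ξ in (0:ℝ)..t, (Real.exp ξ - 1) / ξ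

open Finset Polynomial Set
open scoped Nat

theorem prod_range_X_add_C_eq_ascPochhammer (R : Type*) [CommSemiring R] (k : ℕ) :
    ∏ i ∈ range k, (X + C (i : R)) = ascPochhammer R k := by
  induction k with
  | zero => simp
  | succ k ih => rw [prod_range_succ, ih, ascPochhammer_succ_right, C_eq_natCast]

theorem stirling1_eq_coeff (k j : ℕ) : stirling1 k j = (ascPochhammer ℝ k).coeff j := by
  rw [stirling1, prod_range_X_add_C_eq_ascPochhammer]

theorem stirling1_nonneg (k j : ℕ) : 0 ≤ stirling1 k j := by
  rw [stirling1_eq_coeff, ← ascPochhammer_map (Nat.castRingHom ℝ), coeff_map]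
  exact Nat.cast_nonneg _

theorem stirling1_eq_zero_of_lt {k j : ℕ} (h : k < j) : stirling1 k j = 0 := by
  rw [stirling1_eq_coeff]
  exact coeff_eq_zero_of_natDegree_lt (by rwa [ascPochhammer_natDegree])

theorem sum_range_stirling1_mul_pow (k : ℕ) (x : ℝ) :
    ∑ j ∈ range (k + 1), stirling1 k j * x ^ j = (ascPochhammer ℝ k).eval x := by
  simp only [eval_eq_sum_range, ascPochhammer_natDegree, stirling1_eq_coeff]

theorem stirling1_le_factorial (k j : ℕ) : stirling1 k j ≤ k ! := by
  rcases lt_or_ge k j with hkj | hjk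
  · rw [stirling1_eq_zero_of_lt hkj]
    positivity
  · have hsum := sum_range_stirling1_mul_pow k 1
    simp only [one_pow, mul_one, ascPochhammer_eval_one] at hsum
    rw [← hsum]
    exact single_le_sum (fun i _ => stirling1_nonneg k i) (mem_range.2 (Nat.lt_succ_of_le hjk))

theorem ascFactorial_le_factorial_mul_two_pow (m k : ℕ) : m.ascFactorial k ≤ k ! * 2 ^ (m + k) := by
  rw [Nat.ascFactorial_eq_factorial_mul_choose']
  exact Nat.mul_le_mul_left _
    ((Nat.choose_le_two_pow _ _).trans (Nat.pow_le_pow_right two_pos (Nat.sub_le _ _)))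

theorem eq_of_forall_sum_range_succ_mul_eq {R : Type*} [CommRing R] [IsDomain R]
    {c : ℕ → ℕ → R} (hc : ∀ m, c m m ≠ 0) {a b : ℕ → R}
    (h : ∀ m, ∑ k ∈ range (m + 1), c m k * a k = ∑ k ∈ range (m + 1), c m k * b k) : a = b := by
  funext n
  induction n using Nat.strong_induction_on with
  | _ n ih =>
    have hlow : ∑ k ∈ range n, c n k * a k = ∑ k ∈ range n, c n k * b k :=
      sum_congr rfl fun k hk => by rw [ih k (mem_range.1 hk)]
    have hn := h n
    rw [sum_range_succ, sum_range_succ, hlow] at hn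
    exact mul_left_cancel₀ (hc n) (add_left_cancel hn)

section WeightedMoments

variable {μ ν : Measure ℝ} [IsFiniteMeasure μ] [IsFiniteMeasure ν] {a b : ℝ} {w : ℝ → ℝ}

theorem setIntegral_Icc_mul_eval_eq (hw : Continuous w)
    (h : ∀ n : ℕ, ∫ x in Icc a b, w x * x ^ n ∂μ = ∫ x in Icc a b, w x * x ^ n ∂ν) (P : ℝ[X]) :
    ∫ x in Icc a b, w x * P.eval x ∂μ = ∫ x in Icc a b, w x * P.eval x ∂ν := by
  have hint (ρ : Measure ℝ) [IsFiniteMeasure ρ] (n : ℕ) :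
      IntegrableOn (fun x => P.coeff n * (w x * x ^ n)) (Icc a b) ρ :=
    ((hw.mul (continuous_pow n)).const_mul _).integrableOn_Icc
  simp_rw [eval_eq_sum_range, mul_sum, mul_left_comm (w _)]
  rw [integral_finsetSum _ fun n _ => hint μ n, integral_finsetSum _ fun n _ => hint ν n]
  simp_rw [integral_const_mul, h]

theorem setIntegral_Icc_eq_of_forall_mul_pow_eq (hw : Continuous w)
    (hw₀ : ∀ x ∈ Icc a b, w x ≠ 0)
    (h : ∀ n : ℕ, ∫ x in Icc a b, w x * x ^ n ∂μ = ∫ x in Icc a b, w x * x ^ n ∂ν)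
    {f : ℝ → ℝ} (hf : Continuous f) :
    ∫ x in Icc a b, f x ∂μ = ∫ x in Icc a b, f x ∂ν := by
  obtain ⟨W, hW⟩ := isCompact_Icc.exists_bound_of_continuousOn hw.continuousOn
  set C := |W| * ((μ (Icc a b)).toReal + (ν (Icc a b)).toReal) + 1
  have hC : 0 < C := by positivity
  refine eq_of_forall_dist_le fun ε hε => ?_
  obtain ⟨P, hP⟩ := exists_polynomial_near_of_continuousOn a b (fun x => f x / w x)
    (hf.continuousOn.div hw.continuousOn hw₀) (ε / C) (by positivity)
  have hclose : ∀ x ∈ Icc a b, ‖f x - w x * P.eval x‖ ≤ |W| * (ε / C) := by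
    intro x hx
    have hfw : f x - w x * P.eval x = -w x * (P.eval x - f x / w x) := by
      field_simp [hw₀ x hx]
      ring
    rw [hfw, norm_mul, norm_neg]
    exact mul_le_mul ((hW x hx).trans (le_abs_self W)) (hP x hx).le (norm_nonneg _) (abs_nonneg _)
  have herr (ρ : Measure ℝ) [IsFiniteMeasure ρ] :
      dist (∫ x in Icc a b, f x ∂ρ) (∫ x in Icc a b, w x * P.eval x ∂ρ)
        ≤ |W| * (ε / C) * (ρ (Icc a b)).toReal := by
    have hwP : Continuous fun x => w x * P.eval x := hw.mul P.continuous
    rw [dist_eq_norm, ← integral_sub hf.integrableOn_Icc hwP.integrableOn_Icc]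
    exact norm_setIntegral_le_of_norm_le_const (measure_lt_top ρ _) hclose
  calc dist (∫ x in Icc a b, f x ∂μ) (∫ x in Icc a b, f x ∂ν)
      ≤ dist (∫ x in Icc a b, f x ∂μ) (∫ x in Icc a b, w x * P.eval x ∂μ)
        + dist (∫ x in Icc a b, w x * P.eval x ∂ν) (∫ x in Icc a b, f x ∂ν) := by
        rw [setIntegral_Icc_mul_eval_eq hw h P]
        exact dist_triangle _ _ _
    _ ≤ |W| * (ε / C) * (μ (Icc a b)).toReal + |W| * (ε / C) * (ν (Icc a b)).toReal :=
        add_le_add (herr μ) (dist_comm (α := ℝ) _ _ ▸ herr ν)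
    _ = ε * ((C - 1) / C) := by
        simp only [C]
        ring
    _ ≤ ε := mul_le_of_le_one_right hε.le ((div_le_one hC).2 (by linarith))

end WeightedMoments

noncomputable def pfnTerm (j : ℕ) (s : ℝ) (k : ℕ) : ℝ := s ^ k / k ! * (stirling1 k j / k !)

theorem pfn_eq_exp_mul_tsum (j : ℕ) (s : ℝ) : pfn j s = exp (-s) * ∑' k, pfnTerm j s k := rfl

theorem pfnTerm_nonneg (j k : ℕ) {s : ℝ} (hs : 0 ≤ s) : 0 ≤ pfnTerm j s k := by
  have := stirling1_nonneg k j
  unfold pfnTerm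
  positivity

theorem pfnTerm_eq_zero_of_lt {j k : ℕ} (h : k < j) (s : ℝ) : pfnTerm j s k = 0 := by
  simp [pfnTerm, stirling1_eq_zero_of_lt h]

theorem abs_pfnTerm_le (j k : ℕ) (s : ℝ) : |pfnTerm j s k| ≤ |s| ^ k / k ! := by
  have hk : (0 : ℝ) < k ! := by positivity
  rw [pfnTerm, abs_mul, abs_div, abs_div, abs_pow, abs_of_pos hk,
    abs_of_nonneg (stirling1_nonneg k j)]
  exact mul_le_of_le_one_right (by positivity) ((div_le_one hk).2 (stirling1_le_factorial k j))

theorem summable_pfnTerm (j : ℕ) (s : ℝ) : Summable (pfnTerm j s) :=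
  .of_norm_bounded (Real.summable_pow_div_factorial |s|) fun k => abs_pfnTerm_le j k s

theorem continuous_pfn (j : ℕ) : Continuous (pfn j) := by
  refine (continuous_exp.comp continuous_neg).mul (continuous_iff_continuousAt.2 fun s₀ => ?_)
  have hball : ContinuousOn (fun s => ∑' k, pfnTerm j s k) (Metric.ball 0 (|s₀| + 1)) := by
    refine continuousOn_tsum (fun k => (by unfold pfnTerm; fun_prop))
      (Real.summable_pow_div_factorial (|s₀| + 1)) fun k s hs => (abs_pfnTerm_le j k s).trans ?_
    rw [mem_ball_zero_iff, Real.norm_eq_abs] at hs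
    gcongr
  exact hball.continuousAt (Metric.isOpen_ball.mem_nhds (by simp))

theorem abs_pfn_le {t s : ℝ} (hs : s ∈ Icc 0 t) (j : ℕ) : |pfn j s| ≤ ∑' k, pfnTerm j t k := by
  have hsum_nonneg : 0 ≤ ∑' k, pfnTerm j s k := tsum_nonneg fun k => pfnTerm_nonneg j k hs.1
  rw [pfn_eq_exp_mul_tsum, abs_mul, abs_of_pos (exp_pos _), abs_of_nonneg hsum_nonneg]
  calc exp (-s) * ∑' k, pfnTerm j s k ≤ 1 * ∑' k, pfnTerm j s k :=
        mul_le_mul_of_nonneg_right (exp_le_one_iff.2 (by linarith [hs.1])) hsum_nonneg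
    _ ≤ ∑' k, pfnTerm j t k := by
        rw [one_mul]
        refine (summable_pfnTerm j s).tsum_le_tsum (fun k => ?_) (summable_pfnTerm j t)
        have := stirling1_nonneg k j
        unfold pfnTerm
        gcongr
        exacts [hs.1, hs.2]

theorem tsum_pfnTerm_mul_pow (k : ℕ) (s x : ℝ) :
    ∑' j, pfnTerm j s k * x ^ j = s ^ k / (k ! * k !) * (ascPochhammer ℝ k).eval x := by
  rw [tsum_eq_sum (s := range (k + 1)) fun j hj => by
      rw [pfnTerm_eq_zero_of_lt (by simpa using hj), zero_mul],
    ← sum_range_stirling1_mul_pow, mul_sum]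
  refine sum_congr rfl fun j _ => ?_
  simp only [pfnTerm]
  field_simp

theorem summable_pfnTerm_mul_natCast_pow (m : ℕ) {s : ℝ} (hs : 0 ≤ s) :
    Summable fun p : ℕ × ℕ => pfnTerm p.2 s p.1 * (m : ℝ) ^ p.2 := by
  refine (summable_prod_of_nonneg fun p => mul_nonneg (pfnTerm_nonneg _ _ hs) (by positivity)).2
    ⟨fun k => summable_of_ne_finset_zero (s := range (k + 1)) fun j hj => by
      rw [pfnTerm_eq_zero_of_lt (by simpa using hj), zero_mul], ?_⟩
  simp only [tsum_pfnTerm_mul_pow, ← ascPochhammer_eval_cast, ascPochhammer_nat_eq_ascFactorial]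
  refine .of_nonneg_of_le (fun k => by positivity) (fun k => ?_)
    ((Real.summable_pow_div_factorial (2 * s)).mul_left (2 ^ m))
  have hk : (0 : ℝ) < k ! := by positivity
  calc s ^ k / (k ! * k !) * (m.ascFactorial k : ℝ)
        ≤ s ^ k / (k ! * k !) * (k ! * 2 ^ (m + k)) := by
        gcongr
        exact_mod_cast ascFactorial_le_factorial_mul_two_pow m k
    _ = 2 ^ m * ((2 * s) ^ k / k !) := by
        field_simp
        ring

theorem summable_tsum_pfnTerm_mul_pow (m : ℕ) {t : ℝ} (ht : 0 ≤ t) :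
    Summable fun j => (∑' k, pfnTerm j t k) * (m : ℝ) ^ j := by
  simpa only [Prod.fst_swap, Prod.snd_swap, tsum_mul_right]
    using (summable_pfnTerm_mul_natCast_pow m ht).prod_symm.prod

theorem hasSum_pfn_mul_pow (x : ℝ) {s : ℝ} (hs : 0 ≤ s) :
    HasSum (fun j => pfn j s * x ^ j)
      (exp (-s) * ∑' k, s ^ k / (k ! * k !) * (ascPochhammer ℝ k).eval x) := by
  obtain ⟨m, hm⟩ := exists_nat_ge |x|
  have hF : Summable (Function.uncurry fun k j => pfnTerm j s k * x ^ j) :=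
    .of_norm_bounded (summable_pfnTerm_mul_natCast_pow m hs) fun p => by
      rw [Function.uncurry_apply_pair, norm_mul, norm_pow, Real.norm_eq_abs, Real.norm_eq_abs,
        abs_of_nonneg (pfnTerm_nonneg _ _ hs)]
      exact mul_le_mul_of_nonneg_left (pow_le_pow_left₀ (abs_nonneg x) hm _) (pfnTerm_nonneg _ _ hs)
  have hcols : HasSum (fun j => ∑' k, pfnTerm j s k * x ^ j)
      (∑' k, ∑' j, pfnTerm j s k * x ^ j) := by
    rw [← hF.tsum_comm]
    exact hF.prod_symm.prod.hasSum
  simp only [tsum_pfnTerm_mul_pow] at hcols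
  have hpfn : (fun j => pfn j s * x ^ j) = fun j => exp (-s) * ∑' k, pfnTerm j s k * x ^ j := by
    funext j
    rw [pfn_eq_exp_mul_tsum, mul_assoc, tsum_mul_right]
  rw [hpfn]
  exact hcols.mul_left _

/-- The coefficient of `s ^ k` in the Laguerre polynomial `L_m(s) = ∑ₖ (-1)ᵏ (m choose k) sᵏ / k!`,
written with the rising factorial `(-m)(-m+1)⋯(-m+k-1) = (-1)ᵏ m! / (m-k)!`. -/
noncomputable def laguerreCoeff (m k : ℕ) : ℝ := (ascPochhammer ℝ k).eval (-(m : ℝ)) / (k ! * k !)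

theorem laguerreCoeff_self_ne_zero (m : ℕ) : laguerreCoeff m m ≠ 0 := by
  rw [laguerreCoeff, ascPochhammer_eval_neg_eq_descPochhammer, descPochhammer_eval_eq_descFactorial,
    Nat.descFactorial_self]
  simp [Nat.factorial_ne_zero]

theorem hasSum_pfn_mul_neg_pow (m : ℕ) {s : ℝ} (hs : 0 ≤ s) :
    HasSum (fun j => pfn j s * (-(m : ℝ)) ^ j)
      (∑ k ∈ range (m + 1), laguerreCoeff m k * (exp (-s) * s ^ k)) := by
  convert hasSum_pfn_mul_pow (-(m : ℝ)) hs using 1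
  rw [tsum_eq_sum (s := range (m + 1)) fun k hk => ?_, mul_sum]
  · exact sum_congr rfl fun k _ => by rw [laguerreCoeff]; ring
  · rw [ascPochhammer_eval_neg_coe_nat_of_lt (by simpa using hk), mul_zero]

theorem hasSum_setIntegral_pfn_mul_neg_pow (ρ : Measure ℝ) [IsFiniteMeasure ρ] {t : ℝ}
    (ht : 0 ≤ t) (m : ℕ) :
    HasSum (fun j => (∫ s in Icc 0 t, pfn j s ∂ρ) * (-(m : ℝ)) ^ j)
      (∑ k ∈ range (m + 1), laguerreCoeff m k * ∫ s in Icc 0 t, exp (-s) * s ^ k ∂ρ) := by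
  have hint (k : ℕ) : IntegrableOn (fun s => exp (-s) * s ^ k) (Icc 0 t) ρ :=
    (by fun_prop : Continuous fun s => exp (-s) * s ^ k).integrableOn_Icc
  simp only [← integral_mul_const, ← integral_const_mul]
  rw [← integral_finsetSum _ fun k _ => (hint k).const_mul _]
  refine hasSum_integral_of_dominated_convergence (fun j _ => (∑' k, pfnTerm j t k) * (m : ℝ) ^ j)
    (fun j => ((continuous_pfn j).mul continuous_const).aestronglyMeasurable)
    (fun j => ?_) (ae_of_all _ fun _ => summable_tsum_pfnTerm_mul_pow m ht) (integrable_const _) ?_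
  · filter_upwards [ae_restrict_mem measurableSet_Icc] with s hs
    rw [norm_mul, norm_pow, norm_neg, Real.norm_eq_abs, Real.norm_natCast]
    exact mul_le_mul_of_nonneg_right (abs_pfn_le hs j) (by positivity)
  · filter_upwards [ae_restrict_mem measurableSet_Icc] with s hs
    exact hasSum_pfn_mul_neg_pow m hs.1

/-- Analytic core of Theorem 2: finite Borel measures on `[0,t]` are determined by their
integrals against the functions `p_k`. -/
theorem stmt8 (t : ℝ) (ht : 0 < t) (μ ν : Measure ℝ)
    [IsFiniteMeasure μ] [IsFiniteMeasure ν]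
    (hμ : μ (Set.Icc 0 t)ᶜ = 0) (hν : ν (Set.Icc 0 t)ᶜ = 0)
    (h : ∀ k : ℕ, ∫ s in Set.Icc 0 t, pfn k s ∂μ = ∫ s in Set.Icc 0 t, pfn k s ∂ν) :
    μ = ν := by
  have hmoments : (fun n : ℕ => ∫ s in Icc 0 t, exp (-s) * s ^ n ∂μ)
      = fun n => ∫ s in Icc 0 t, exp (-s) * s ^ n ∂ν :=
    eq_of_forall_sum_range_succ_mul_eq laguerreCoeff_self_ne_zero fun m =>
      (hasSum_setIntegral_pfn_mul_neg_pow μ ht.le m).unique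
        (by simpa only [h] using hasSum_setIntegral_pfn_mul_neg_pow ν ht.le m)
  have hcont (f : ℝ → ℝ) (hf : Continuous f) :
      ∫ s in Icc 0 t, f s ∂μ = ∫ s in Icc 0 t, f s ∂ν :=
    setIntegral_Icc_eq_of_forall_mul_pow_eq (by fun_prop) (fun s _ => (exp_pos _).ne')
      (congrFun hmoments) hf
  calc μ = μ.restrict (Icc 0 t) := (Measure.restrict_eq_self_of_ae_mem (ae_iff.2 hμ)).symm
    _ = ν.restrict (Icc 0 t) :=
        ext_of_forall_integral_eq_of_IsFiniteMeasure fun f => hcont f f.continuous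
    _ = ν := Measure.restrict_eq_self_of_ae_mem (ae_iff.2 hν)
end

section
/- For every integer j ≥ 1, the function p_j satisfies p_j(0) = 0 and, for all t > 0, the differential recursion p_j'(t) = −p_j(t) + (1/t)·∫_0^t p_{j−1}(s) ds. -/
/-!
Write `p_j(t) = e^{-t} f_j(t)` with `f_j(t) = Σ_k c_j(k) t^k`, `c_j(k) = σ₁(k,j)/(k!)²`. Then
`p_j' = -p_j + e^{-t} f_j'`, so it suffices that `t e^{-t} f_j'(t)` is a primitive of `p_{j-1}`
vanishing at `0`. Differentiating, this amounts to `(t f_j')' = f_{j-1} + t f_j'`, which on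
coefficients is the recurrence `σ₁(k+1,j) = k σ₁(k,j) + σ₁(k,j-1)`.
-/

open MeasureTheory ProbabilityTheory Real

open MeasureTheory ProbabilityTheory Real

open scoped Nat

lemma stirling1_zero_succ (j : ℕ) : stirling1 0 (j + 1) = 0 := by
  simp [stirling1, Polynomial.coeff_one]

lemma stirling1_succ_zero (k : ℕ) : stirling1 (k + 1) 0 = k * stirling1 k 0 := by
  rw [stirling1, Finset.prod_range_succ, Polynomial.mul_coeff_zero]
  simp [stirling1, mul_comm]

lemma stirling1_succ_succ (k j : ℕ) :
    stirling1 (k + 1) (j + 1) = k * stirling1 k (j + 1) + stirling1 k j := by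
  unfold stirling1
  rw [Finset.prod_range_succ, mul_add, Polynomial.coeff_add, Polynomial.coeff_mul_X,
    Polynomial.coeff_mul_C]
  ring

lemma abs_stirling1_le_factorial (k j : ℕ) : |stirling1 k j| ≤ k ! := by
  induction k generalizing j with
  | zero => cases j <;> simp [stirling1, Polynomial.coeff_one]
  | succ k ih =>
    have hk : (0 : ℝ) ≤ k := k.cast_nonneg
    have hfact : ((k + 1)! : ℝ) = k * k ! + k ! := by push_cast [Nat.factorial_succ]; ring
    rw [hfact]
    cases j with
    | zero =>
      rw [stirling1_succ_zero, abs_mul, abs_of_nonneg hk]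
      nlinarith [ih 0, (k !).cast_nonneg (α := ℝ)]
    | succ j =>
      rw [stirling1_succ_succ]
      calc |k * stirling1 k (j + 1) + stirling1 k j|
          ≤ k * |stirling1 k (j + 1)| + |stirling1 k j| :=
            (abs_add_le _ _).trans_eq (by rw [abs_mul, abs_of_nonneg hk])
        _ ≤ k * k ! + k ! := by gcongr <;> apply ih

lemma hasDerivAt_exp_neg (x : ℝ) : HasDerivAt (fun y => Real.exp (-y)) (-Real.exp (-x)) x := by
  simpa using (hasDerivAt_neg x).exp

section PowerSeries

def AbsLeInvFactorial (a : ℕ → ℝ) : Prop := ∀ k, |a k| ≤ 1 / k !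

noncomputable def powSeries (a : ℕ → ℝ) (t : ℝ) : ℝ := ∑' k, a k * t ^ k

def derivCoeff (a : ℕ → ℝ) (k : ℕ) : ℝ := (k + 1) * a (k + 1)

variable {a b : ℕ → ℝ}

protected lemma AbsLeInvFactorial.derivCoeff (ha : AbsLeInvFactorial a) :
    AbsLeInvFactorial (derivCoeff a) := by
  intro k
  have hfact : ((k + 1)! : ℝ) = (k + 1) * k ! := by push_cast [Nat.factorial_succ]; ring
  calc |derivCoeff a k| = (k + 1) * |a (k + 1)| := by
        rw [derivCoeff, abs_mul, abs_of_nonneg (by positivity)]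
    _ ≤ (k + 1) * (1 / (k + 1)!) := by gcongr; exact ha (k + 1)
    _ = 1 / k ! := by rw [hfact]; field_simp

lemma AbsLeInvFactorial.norm_mul_pow_le (ha : AbsLeInvFactorial a) {R y : ℝ} (hy : |y| ≤ R)
    (k : ℕ) : ‖a k * y ^ k‖ ≤ R ^ k / k ! := by
  rw [Real.norm_eq_abs, abs_mul, abs_pow]
  calc |a k| * |y| ^ k ≤ 1 / k ! * R ^ k :=
        mul_le_mul (ha k) (pow_le_pow_left₀ (abs_nonneg y) hy k) (by positivity) (by positivity)
    _ = R ^ k / k ! := by ring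

lemma AbsLeInvFactorial.hasSum_powSeries (ha : AbsLeInvFactorial a) (t : ℝ) :
    HasSum (fun k => a k * t ^ k) (powSeries a t) :=
  (Summable.of_norm_bounded (Real.summable_pow_div_factorial |t|)
    (ha.norm_mul_pow_le le_rfl)).hasSum

lemma AbsLeInvFactorial.hasDerivAt_powSeries (ha : AbsLeInvFactorial a) (t : ℝ) :
    HasDerivAt (powSeries a) (powSeries (derivCoeff a) t) t := by
  have hshift : powSeries a = fun y => a 0 + ∑' k, a (k + 1) * y ^ (k + 1) := by
    funext y
    rw [powSeries, tsum_eq_zero_add' ((summable_nat_add_iff 1).mpr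
      (ha.hasSum_powSeries y).summable), pow_zero, mul_one]
  have hterms : HasDerivAt (fun y => ∑' k, a (k + 1) * y ^ (k + 1))
      (∑' k, derivCoeff a k * t ^ k) t := by
    refine hasDerivAt_tsum_of_isPreconnected (g := fun k y => a (k + 1) * y ^ (k + 1))
      (g' := fun k y => derivCoeff a k * y ^ k) (y₀ := 0)
      (Real.summable_pow_div_factorial (|t| + 1))
      Metric.isOpen_ball (convex_ball (0 : ℝ) (|t| + 1)).isPreconnected
      (fun k y _ => ?_) (fun k y hy => ?_) (Metric.mem_ball_self (by positivity)) ?_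
      (y := t) (by simp)
    · refine ((hasDerivAt_pow (k + 1) y).const_mul (a (k + 1))).congr_deriv ?_
      simp only [derivCoeff, Nat.add_sub_cancel, Nat.cast_succ]
      ring
    · rw [Metric.mem_ball, Real.dist_eq, sub_zero] at hy
      exact ha.derivCoeff.norm_mul_pow_le hy.le k
    · simp
  rw [hshift]
  simpa [powSeries] using hterms.const_add (a 0)

lemma AbsLeInvFactorial.continuous_powSeries (ha : AbsLeInvFactorial a) :
    Continuous (powSeries a) :=
  continuous_iff_continuousAt.mpr fun t => (ha.hasDerivAt_powSeries t).continuousAt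

lemma AbsLeInvFactorial.hasSum_mul_powSeries_derivCoeff (ha : AbsLeInvFactorial a) (t : ℝ) :
    HasSum (fun k => k * a k * t ^ k) (t * powSeries (derivCoeff a) t) := by
  have hterms : (fun k : ℕ => t * (derivCoeff a k * t ^ k))
      = fun k => ((k + 1 : ℕ) : ℝ) * a (k + 1) * t ^ (k + 1) := by
    funext k
    simp only [derivCoeff]
    push_cast
    ring
  have h := (ha.derivCoeff.hasSum_powSeries t).mul_left t
  rw [hterms] at h
  exact (hasSum_nat_add_iff' (f := fun k : ℕ => (k : ℝ) * a k * t ^ k) 1).mp (by simpa using h)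

/-- With `f = powSeries a` and `g = powSeries b`, this is `(t f')' = g + t f'`; `hab` is the same
identity read on the coefficients. -/
lemma powSeries_derivCoeff_add_mul (ha : AbsLeInvFactorial a) (hb : AbsLeInvFactorial b)
    (hab : ∀ k, (k + 1) * derivCoeff a k = b k + k * a k) (t : ℝ) :
    powSeries (derivCoeff a) t + t * powSeries (derivCoeff (derivCoeff a)) t
      = powSeries b t + t * powSeries (derivCoeff a) t := by
  refine ((ha.derivCoeff.hasSum_powSeries t).add
    (ha.derivCoeff.hasSum_mul_powSeries_derivCoeff t)).unique ?_
  convert (hb.hasSum_powSeries t).add (ha.hasSum_mul_powSeries_derivCoeff t) using 2 with k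
  linear_combination t ^ k * hab k

lemma integral_exp_neg_mul_powSeries (ha : AbsLeInvFactorial a) (hb : AbsLeInvFactorial b)
    (hab : ∀ k, (k + 1) * derivCoeff a k = b k + k * a k) (t : ℝ) :
    ∫ s in (0 : ℝ)..t, Real.exp (-s) * powSeries b s
      = t * (Real.exp (-t) * powSeries (derivCoeff a) t) := by
  have hprim (x : ℝ) : HasDerivAt (fun y => y * (Real.exp (-y) * powSeries (derivCoeff a) y))
      (Real.exp (-x) * powSeries b x) x := by
    refine ((hasDerivAt_id' x).mul
      ((hasDerivAt_exp_neg x).mul (ha.derivCoeff.hasDerivAt_powSeries x))).congr_deriv ?_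
    simp only [Pi.mul_apply]
    linear_combination Real.exp (-x) * powSeries_derivCoeff_add_mul ha hb hab x
  have hcont : Continuous fun s => Real.exp (-s) * powSeries b s :=
    (Real.continuous_exp.comp continuous_neg).mul hb.continuous_powSeries
  rw [intervalIntegral.integral_eq_sub_of_hasDerivAt (fun x _ => hprim x)
    (hcont.intervalIntegrable _ _)]
  simp

end PowerSeries

noncomputable def pCoeff (j k : ℕ) : ℝ := stirling1 k j / (k ! : ℝ) ^ 2

lemma absLeInvFactorial_pCoeff (j : ℕ) : AbsLeInvFactorial (pCoeff j) := by
  intro k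
  have hpos : (0 : ℝ) < k ! := by positivity
  rw [pCoeff, abs_div, abs_of_pos (pow_pos hpos 2), div_le_div_iff₀ (pow_pos hpos 2) hpos]
  nlinarith [abs_stirling1_le_factorial k j]

lemma succ_mul_derivCoeff_pCoeff_succ (m k : ℕ) :
    (k + 1) * derivCoeff (pCoeff (m + 1)) k = pCoeff m k + k * pCoeff (m + 1) k := by
  have : (k ! : ℝ) ≠ 0 := by positivity
  rw [derivCoeff, pCoeff, pCoeff, pCoeff, stirling1_succ_succ, Nat.factorial_succ]
  push_cast
  field_simp
  ring

lemma pfn_eq_exp_neg_mul_powSeries (j : ℕ) :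
    pfn j = fun t => Real.exp (-t) * powSeries (pCoeff j) t := by
  funext t
  rw [pfn, powSeries]
  congr 1
  exact tsum_congr fun k => by rw [pCoeff]; ring

lemma pfn_succ_zero (m : ℕ) : pfn (m + 1) 0 = 0 := by
  simp only [pfn_eq_exp_neg_mul_powSeries, powSeries]
  rw [tsum_eq_single 0 (fun k hk => by simp [hk])]
  simp [pCoeff, stirling1_zero_succ]

lemma hasDerivAt_pfn (j : ℕ) (t : ℝ) :
    HasDerivAt (pfn j) (-pfn j t + Real.exp (-t) * powSeries (derivCoeff (pCoeff j)) t) t := by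
  rw [pfn_eq_exp_neg_mul_powSeries]
  refine ((hasDerivAt_exp_neg t).mul
    ((absLeInvFactorial_pCoeff j).hasDerivAt_powSeries t)).congr_deriv ?_
  dsimp only
  ring

lemma integral_pfn (m : ℕ) (t : ℝ) :
    ∫ s in (0 : ℝ)..t, pfn m s
      = t * (Real.exp (-t) * powSeries (derivCoeff (pCoeff (m + 1))) t) := by
  rw [pfn_eq_exp_neg_mul_powSeries]
  exact integral_exp_neg_mul_powSeries (absLeInvFactorial_pCoeff _) (absLeInvFactorial_pCoeff m)
    (succ_mul_derivCoeff_pCoeff_succ m) t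

/-- The differential recursion for the record-count probabilities:
`p_j(0) = 0` and `p_j'(t) = -p_j(t) + (1/t)∫_0^t p_{j-1}(s) ds` for `t > 0`, `j ≥ 1`. -/
theorem stmt11 (j : ℕ) (hj : 1 ≤ j) :
    pfn j 0 = 0 ∧
    ∀ t : ℝ, 0 < t →
      HasDerivAt (pfn j) (-pfn j t + (1 / t) * ∫ s in (0:ℝ)..t, pfn (j - 1) s) t := by
  obtain ⟨m, rfl⟩ : ∃ m, j = m + 1 := ⟨j - 1, (Nat.sub_add_cancel hj).symm⟩
  refine ⟨pfn_succ_zero m, fun t ht => ?_⟩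
  rw [Nat.add_sub_cancel, integral_pfn, one_div, inv_mul_cancel_left₀ ht.ne']
  exact hasDerivAt_pfn (m + 1) t
end
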